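/- Assume the poset of contexts of A satisfies the ascending chain condition: every increasing sequence C₁ ⊆ C₂ ⊆ C₃ ⊆ ⋯ of contexts is eventually constant. Then Σ_* is a sober space: every nonempty irreducible closed subset F of Σ_* is the closure of a unique point, i.e. there exists exactly one (C,λ) ∈ Σ with F = closure({(C,λ)}) in Σ_*. In particular this holds whenever A is finite-dimensional. -/

import Mathlib

/-!
Closed subsets of `Σ_*` are the subsets with closed fibres that are stable under restricting
characters, so the closure of `(C, λ)` is `{(D, λ|_D) : D ⊆ C}` and `Σ_*` is T₀. For an
irreducible closed `F`, the opens `{(C', λ') : C ⊆ C', λ'|_C ∈ O}` force each fibre `F_C` to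
have at most one point (as `Σ_C` is Hausdorff) and any two contexts met by `F` to lie below a
common one met by `F`. By the ascending chain condition some context `C` met by `F` is maximal,
hence largest, and `F` is the closure of its point over `C`.
-/

open WeakDual

variable (A : Type*) [CStarAlgebra A]

/-- A classical context: a commutative unital closed star-subalgebra of `A`. -/
structure Context where
  carrier : Subalgebra ℂ A
  star_mem' : ∀ x ∈ carrier, star x ∈ carrier
  isClosed' : IsClosed (carrier : Set A)
  mul_comm' : ∀ x ∈ carrier, ∀ y ∈ carrier, x * y = y * x

variable {A}

/-- The Gelfand spectrum of a context: the character space of `C`. -/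
abbrev Context.Spec (C : Context A) : Type _ := characterSpace ℂ C.carrier

/-- The inclusion of a smaller context into a larger one, as a continuous linear map. -/
def Context.inclCLM {D C : Context A} (h : D.carrier ≤ C.carrier) :
    D.carrier →L[ℂ] C.carrier where
  toLinearMap := (Subalgebra.inclusion h).toLinearMap
  cont := continuous_induced_rng.mpr continuous_subtype_val

/-- Restriction of a character along an inclusion of contexts. -/
noncomputable def Context.restrictChar {D C : Context A} (h : D.carrier ≤ C.carrier)
    (lam : C.Spec) : D.Spec :=
  ⟨(lam : WeakDual ℂ C.carrier).comp (Context.inclCLM h), by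
    constructor
    · intro h0
      have h1 : (lam : WeakDual ℂ C.carrier).comp (Context.inclCLM h) (1 : D.carrier) = 0 := by
        rw [h0]; rfl
      have h2 : (lam : WeakDual ℂ C.carrier).comp (Context.inclCLM h) (1 : D.carrier) = 1 := by
        show lam ((Context.inclCLM h) (1 : D.carrier)) = 1
        have h3 : (Context.inclCLM h) (1 : D.carrier) = (1 : C.carrier) := rfl
        rw [h3]
        exact map_one lam
      rw [h1] at h2
      exact zero_ne_one h2
    · intro x y
      show lam ((Context.inclCLM h) (x * y)) = lam ((Context.inclCLM h) x) * lam ((Context.inclCLM h) y)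
      have h4 : (Context.inclCLM h) (x * y) = (Context.inclCLM h) x * (Context.inclCLM h) y := rfl
      rw [h4]
      exact map_mul lam _ _⟩


/-- The disjoint union of all Gelfand spectra of contexts. -/
abbrev SigmaSpace (A : Type*) [CStarAlgebra A] : Type _ := (C : Context A) × C.Spec

/-- The Alexandrov topology on the poset of contexts: opens are the upward closed sets. -/
instance : TopologicalSpace (Context A) where
  IsOpen s := ∀ C ∈ s, ∀ D : Context A, C.carrier ≤ D.carrier → D ∈ s
  isOpen_univ := fun _ _ _ _ => trivial
  isOpen_inter := fun s t hs ht C hC D hD => ⟨hs C hC.1 D hD, ht C hC.2 D hD⟩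
  isOpen_sUnion := fun S hS C hC D hD => by
    obtain ⟨s, hsS, hCs⟩ := hC
    exact ⟨s, hsS, hS s hsS C hCs D hD⟩

/-- The topology `𝒪 Σ_*` of the covariant approach: a set is open iff each of its fibres
is open and it is closed under passing to extensions of characters. -/
instance : TopologicalSpace (SigmaSpace A) where
  IsOpen U := (∀ C : Context A, IsOpen {lam : C.Spec | Sigma.mk C lam ∈ U}) ∧
    ∀ (C C' : Context A) (h : C.carrier ≤ C'.carrier) (lam' : C'.Spec),
      Sigma.mk C (Context.restrictChar h lam') ∈ U → Sigma.mk C' lam' ∈ U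
  isOpen_univ := ⟨fun _ => isOpen_univ, fun _ _ _ _ _ => trivial⟩
  isOpen_inter := fun U V hU hV => ⟨fun C => (hU.1 C).inter (hV.1 C),
    fun C C' h lam hm => ⟨hU.2 C C' h lam hm.1, hV.2 C C' h lam hm.2⟩⟩
  isOpen_sUnion := fun S hS => by
    constructor
    · intro C
      have h1 : {lam : C.Spec | Sigma.mk C lam ∈ ⋃₀ S} =
          ⋃ U ∈ S, {lam : C.Spec | Sigma.mk C lam ∈ U} := by
        ext lam; simp
      rw [h1]
      exact isOpen_biUnion fun U hU => (hS U hU).1 C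
    · rintro C C' h lam ⟨U, hUS, hmU⟩
      exact ⟨U, hUS, (hS U hUS).2 C C' h lam hmU⟩

open Set

namespace Context

theorem carrier_injective : Function.Injective (Context.carrier : Context A → Subalgebra ℂ A) := by
  rintro ⟨⟩ ⟨⟩ rfl
  rfl

instance : PartialOrder (Context A) := PartialOrder.lift _ carrier_injective

theorem continuous_restrictChar {D C : Context A} (h : D ≤ C) :
    Continuous (restrictChar h) := by
  refine continuous_induced_rng.mpr (WeakDual.continuous_of_continuous_eval fun y => ?_)
  exact (WeakDual.eval_continuous (inclCLM h y)).comp continuous_subtype_val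

end Context

namespace SigmaSpace

open Context

theorem isClosed_iff {F : Set (SigmaSpace A)} :
    IsClosed F ↔ (∀ C : Context A, IsClosed {lam : C.Spec | ⟨C, lam⟩ ∈ F}) ∧
      ∀ (C C' : Context A) (h : C ≤ C') (lam' : C'.Spec),
        ⟨C', lam'⟩ ∈ F → ⟨C, restrictChar h lam'⟩ ∈ F := by
  rw [← isOpen_compl_iff]
  change (∀ C : Context A, IsOpen {lam : C.Spec | _}) ∧ _ ↔ _
  simp only [mem_compl_iff, ← compl_ofPred, isOpen_compl_iff, not_imp_not]
  rfl

theorem _root_.IsClosed.restrictChar_mem {F : Set (SigmaSpace A)} (hF : IsClosed F)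
    {C C' : Context A} (h : C ≤ C') {lam' : C'.Spec} (hmem : ⟨C', lam'⟩ ∈ F) :
    ⟨C, restrictChar h lam'⟩ ∈ F :=
  (isClosed_iff.1 hF).2 C C' h lam' hmem

def restrictPreimage (C : Context A) (O : Set C.Spec) : Set (SigmaSpace A) :=
  {q | ∃ h : C ≤ q.1, restrictChar h q.2 ∈ O}

theorem mk_mem_restrictPreimage_self {C : Context A} {O : Set C.Spec} {lam : C.Spec}
    (hlam : lam ∈ O) : ⟨C, lam⟩ ∈ restrictPreimage C O :=
  ⟨le_rfl, hlam⟩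

theorem isOpen_restrictPreimage (C : Context A) {O : Set C.Spec} (hO : IsOpen O) :
    IsOpen (restrictPreimage C O) := by
  refine ⟨fun D => ?_, ?_⟩
  · by_cases hCD : C ≤ D
    · convert hO.preimage (continuous_restrictChar hCD) using 1
      ext mu
      exact ⟨fun ⟨_, hmu⟩ => hmu, fun hmu => ⟨hCD, hmu⟩⟩
    · convert isOpen_empty
      exact eq_empty_of_forall_notMem fun mu ⟨h, _⟩ => hCD h
  · rintro D D' hDD' lam' ⟨hCD, hmem⟩
    exact ⟨hCD.trans hDD', hmem⟩

theorem mk_specializes_mk_iff {C D : Context A} {lam : C.Spec} {mu : D.Spec} :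
    (⟨C, lam⟩ : SigmaSpace A) ⤳ ⟨D, mu⟩ ↔ ∃ h : D ≤ C, restrictChar h lam = mu := by
  set S : Set (SigmaSpace A) := {q | ∃ h : q.1 ≤ C, restrictChar h lam = q.2}
  -- The ascriptions keep the proofs `h` from mentioning the point, so that `rfl` can substitute.
  have hS : IsClosed S := by
    refine isClosed_iff.2 ⟨fun E => Subsingleton.isClosed ?_, ?_⟩
    · rintro nu₁ (hnu₁ : ∃ h : E ≤ C, restrictChar h lam = nu₁)
        nu₂ (hnu₂ : ∃ h : E ≤ C, restrictChar h lam = nu₂)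
      obtain ⟨-, rfl⟩ := hnu₁
      obtain ⟨-, rfl⟩ := hnu₂
      rfl
    · rintro E E' hEE' nu' (hnu' : ∃ h : E' ≤ C, restrictChar h lam = nu')
      obtain ⟨hE'C, rfl⟩ := hnu'
      exact ⟨hEE'.trans hE'C, rfl⟩
  suffices closure {(⟨C, lam⟩ : SigmaSpace A)} = S by rw [specializes_iff_mem_closure, this]; rfl
  refine (closure_minimal (singleton_subset_iff.2 (show _ ∈ S from ⟨le_rfl, rfl⟩)) hS).antisymm ?_
  rintro ⟨E, nu⟩ (hnu : ∃ h : E ≤ C, restrictChar h lam = nu)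
  obtain ⟨h, rfl⟩ := hnu
  exact isClosed_closure.restrictChar_mem h (subset_closure rfl)

instance : T0Space (SigmaSpace A) where
  t0 := by
    rintro ⟨C, lam⟩ ⟨D, mu⟩ h
    obtain ⟨hDC, rfl⟩ := mk_specializes_mk_iff.1 h.specializes
    obtain ⟨hCD, -⟩ := mk_specializes_mk_iff.1 h.specializes'
    obtain rfl : C = D := le_antisymm hCD hDC
    -- restricting along `C ≤ C` is definitionally the identity
    rfl

section Preirreducible

variable {F : Set (SigmaSpace A)} (hF : IsPreirreducible F)
include hF

theorem subsingleton_fiber_of_isPreirreducible (C : Context A) :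
    {lam : C.Spec | ⟨C, lam⟩ ∈ F}.Subsingleton := by
  intro lam hlam mu hmu
  by_contra hne
  obtain ⟨O, O', hO, hO', hlamO, hmuO', hOO'⟩ := t2_separation hne
  obtain ⟨q, -, ⟨_, hqO⟩, ⟨_, hqO'⟩⟩ :=
    hF _ _ (isOpen_restrictPreimage C hO) (isOpen_restrictPreimage C hO')
      ⟨_, hlam, mk_mem_restrictPreimage_self hlamO⟩ ⟨_, hmu, mk_mem_restrictPreimage_self hmuO'⟩
  exact hOO'.notMem_of_mem_left hqO hqO'

theorem exists_le_of_isPreirreducible {p q : SigmaSpace A} (hp : p ∈ F) (hq : q ∈ F) :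
    ∃ r ∈ F, p.1 ≤ r.1 ∧ q.1 ≤ r.1 := by
  obtain ⟨r, hr, ⟨hpr, -⟩, ⟨hqr, -⟩⟩ :=
    hF _ _ (isOpen_restrictPreimage p.1 isOpen_univ) (isOpen_restrictPreimage q.1 isOpen_univ)
      ⟨p, hp, mk_mem_restrictPreimage_self trivial⟩ ⟨q, hq, mk_mem_restrictPreimage_self trivial⟩
  exact ⟨r, hr, hpr, hqr⟩

end Preirreducible

theorem quasiSober_of_wellFoundedGT [WellFoundedGT (Context A)] : QuasiSober (SigmaSpace A) := by
  refine ⟨fun {F} hirr hcl => ?_⟩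
  obtain ⟨_, ⟨⟨C, lam⟩, hp, rfl⟩, hmax⟩ :=
    wellFounded_gt.has_min (Sigma.fst '' F) (hirr.nonempty.image _)
  refine ⟨⟨C, lam⟩, isGenericPoint_iff_specializes.2 fun ⟨D, mu⟩ =>
    ⟨fun h => h.mem_closed hcl hp, fun hq => ?_⟩⟩
  obtain ⟨r, hr, hCr, hDr⟩ := exists_le_of_isPreirreducible hirr.2 hp hq
  have hrC : r.1 = C := (hCr.eq_of_not_lt (hmax _ ⟨r, hr, rfl⟩)).symm
  have hDC : D ≤ C := hrC ▸ hDr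
  exact mk_specializes_mk_iff.2
    ⟨hDC, subsingleton_fiber_of_isPreirreducible hirr.2 D (hcl.restrictChar_mem hDC hp) hq⟩

end SigmaSpace

/-- If the poset of contexts of `A` satisfies the ascending chain
condition (every increasing sequence of contexts is eventually constant), then `Σ_*` is a
sober space: every irreducible closed subset is the closure of a unique point. -/
theorem statement12
    (hacc : ∀ f : ℕ → Context A, (∀ k, (f k).carrier ≤ (f (k + 1)).carrier) →
      ∃ N, ∀ m, N ≤ m → f m = f N) :
    ∀ F : Set (SigmaSpace A), IsClosed F → IsIrreducible F →
      ∃! p : SigmaSpace A, F = closure {p} := by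
  have : WellFoundedGT (Context A) := wellFoundedGT_iff_monotone_chain_condition.2 fun f =>
    (hacc f fun k => f.monotone k.le_succ).imp fun _ hN m hm => (hN m hm).symm
  intro F hcl hirr
  obtain ⟨p, hp⟩ := (SigmaSpace.quasiSober_of_wellFoundedGT (A := A)).sober hirr hcl
  exact ⟨p, hp.symm, fun q hq => IsGenericPoint.eq hq.symm hp⟩
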